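/- arXiv:1111.1124 — 4 statements merged into one kernel-verified Lean document; each statement's English description precedes it below -/
import Mathlib

section
/- Let f be a partial Boolean function on {0,1}^n that takes value 1 on at least one point, and suppose f is consistent with some DNF formula having s terms. Then there exists a monomial T of size at most 2·sqrt(n·ln s) that covers at least one positive example of f, and such that the projection of f obtained by setting all literals of T to 1 is consistent with a single monomial. -/
/-- `x` satisfies every literal in the monomial `T` (a literal is a pair
(variable, polarity)). -/
def covers {n : ℕ} (T : Finset (Fin n × Bool)) (x : Fin n → Bool) : Prop :=
  ∀ l ∈ T, x l.1 = l.2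

/-- A DNF formula, viewed as a finite set of terms, evaluates to true on `x`. -/
def DNFeval {n : ℕ} (φ : Finset (Finset (Fin n × Bool))) (x : Fin n → Bool) : Prop :=
  ∃ T ∈ φ, covers T x

/-- The DNF `φ` is consistent with the partial Boolean function `f`. -/
def consistentDNF {n : ℕ} (φ : Finset (Finset (Fin n × Bool)))
    (f : (Fin n → Bool) → Option Bool) : Prop :=
  ∀ x, (f x = some true → DNFeval φ x) ∧ (f x = some false → ¬ DNFeval φ x)

instance {n : ℕ} (T : Finset (Fin n × Bool)) (x : Fin n → Bool) :
    Decidable (covers T x) :=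
  decidable_of_iff (∀ l ∈ T, x l.1 = l.2) Iff.rfl

/-- The terms of `φ` that are "useful" relative to the partial monomial `T`:
those covering at least one positive example of `f` that also covers `T`. -/
def useful {n : ℕ} (φ : Finset (Finset (Fin n × Bool)))
    (f : (Fin n → Bool) → Option Bool) (T : Finset (Fin n × Bool)) :
    Finset (Finset (Fin n × Bool)) :=
  φ.filter (fun M => ∃ x : Fin n → Bool, covers M x ∧ covers T x ∧ f x = some true)

theorem seed_aux {n s : ℕ} (f : (Fin n → Bool) → Option Bool)
    (φ : Finset (Finset (Fin n × Bool))) (hcard : φ.card = s)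
    (hcons : consistentDNF φ f) (K L : ℝ)
    (hL : L = Real.log s) (hK : K = 2 * Real.sqrt (n * L)) (hs : 2 ≤ s) :
    ∀ μ : ℕ, ∀ T F : Finset (Fin n × Bool), T ⊆ F →
      (∃ a, covers T a ∧ f a = some true) →
      (∀ l ∈ F, ∀ x, covers T x → f x = some true → x l.1 = l.2) →
      (((useful φ f T).card : ℝ) ≤
        s * Real.exp (-(((T.card : ℝ) * K - (T.card : ℝ) * ((T.card : ℝ) - 1) / 2) / (2 * n)))) →
      ((T.card : ℝ) < K + 1) →
      ((useful φ f T).card * (n + 1) + (n - (F.image Prod.fst).card) ≤ μ) →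
      ∃ T' : Finset (Fin n × Bool),
        ((T'.card : ℝ) ≤ K) ∧
        (∃ x, covers T' x ∧ f x = some true) ∧
        (∃ M : Finset (Fin n × Bool), ∀ x, covers T' x →
          (f x = some true → covers M x) ∧ (f x = some false → ¬ covers M x)) := by
  intro μ
  induction μ using Nat.strong_induction_on with
  | _ μ IH =>
  intro T F h0 h1 h2 h3 h4 h5
  by_cases hfin : ∃ M ∈ useful φ f T, ((M \ F).card : ℝ) ≤ K - T.card
  · -- Finish: output T ∪ (M \ F) with witness monomial M ∩ F.
    obtain ⟨M, hMU, hMcard⟩ := hfin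
    obtain ⟨hMφ, x, hxM, hxT, hxf⟩ := Finset.mem_filter.mp hMU
    refine ⟨T ∪ (M \ F), ?_, ⟨x, ?_, hxf⟩, ⟨M ∩ F, ?_⟩⟩
    · have hc : ((T ∪ (M \ F)).card : ℝ) ≤ (T.card : ℝ) + ((M \ F).card : ℝ) := by
        exact_mod_cast Finset.card_union_le T (M \ F)
      linarith
    · intro p hp
      rcases Finset.mem_union.mp hp with h | h
      · exact hxT p h
      · exact hxM p (Finset.mem_sdiff.mp h).1
    · intro y hyT'
      constructor
      · intro hyf p hp
        exact h2 p (Finset.mem_inter.mp hp).2 y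
          (fun q hq => hyT' q (Finset.mem_union_left _ hq)) hyf
      · intro hyf hyM'
        have hyM : covers M y := by
          intro p hp
          by_cases hpF : p ∈ F
          · exact hyM' p (Finset.mem_inter.mpr ⟨hp, hpF⟩)
          · exact hyT' p (Finset.mem_union_right _ (Finset.mem_sdiff.mpr ⟨hp, hpF⟩))
        exact (hcons y).2 hyf ⟨M, hMφ, hyM⟩
  · push_neg at hfin
    have hUne : (useful φ f T).Nonempty := by
      obtain ⟨a, haT, haf⟩ := h1
      obtain ⟨M, hMφ, hMa⟩ := (hcons a).1 haf
      exact ⟨M, Finset.mem_filter.mpr ⟨hMφ, a, hMa, haT, haf⟩⟩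
    have hK0 : 0 ≤ K := by rw [hK]; positivity
    have hn : 0 < n := by
      rcases Nat.eq_zero_or_pos n with hn0 | hn0
      · exfalso
        subst hn0
        obtain ⟨M, hMU⟩ := hUne
        have hT0 : T = ∅ := Finset.eq_empty_of_forall_notMem fun p _ => p.1.elim0
        have hM0 : M \ F = ∅ := Finset.eq_empty_of_forall_notMem fun p _ => p.1.elim0
        have hc := hfin M hMU
        rw [hT0, hM0] at hc
        simp at hc
        linarith
      · exact hn0
    have hs1 : (1 : ℝ) < (s : ℝ) := by exact_mod_cast hs.trans_lt' one_lt_two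
    have hL0 : 0 < L := by rw [hL]; exact Real.log_pos hs1
    have hKpos : 0 < K := by
      rw [hK]
      have hnl : (0 : ℝ) < (n : ℝ) * L := by
        have : (0 : ℝ) < (n : ℝ) := by exact_mod_cast hn
        positivity
      have := Real.sqrt_pos.mpr hnl
      linarith
    have hm1 : (1 : ℝ) ≤ ((useful φ f T).card : ℝ) := by exact_mod_cast hUne.card_pos
    have h2n : (0 : ℝ) < 2 * (n : ℝ) := by
      have : (0 : ℝ) < (n : ℝ) := by exact_mod_cast hn
      linarith
    by_cases hiK : (T.card : ℝ) < K
    · -- Counting step: find a popular free literal.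
      set U := useful φ f T with hUdef
      classical
      set free : Finset (Fin n) := Finset.univ \ F.image Prod.fst with hfreedef
      set FL : Finset (Fin n × Bool) := free ×ˢ Finset.univ with hFLdef
      have hMFL : ∀ M ∈ U, M \ F ⊆ FL := by
        intro M hM l hl
        obtain ⟨hMφ, x, hxM, hxT, hxf⟩ := Finset.mem_filter.mp hM
        rw [Finset.mem_sdiff] at hl
        refine Finset.mem_product.mpr ⟨?_, Finset.mem_univ _⟩
        refine Finset.mem_sdiff.mpr ⟨Finset.mem_univ _, ?_⟩
        intro himg
        obtain ⟨p, hpF, hp1⟩ := Finset.mem_image.mp himg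
        have hxp := h2 p hpF x hxT hxf
        have hxl := hxM l hl.1
        have hpl : p = l := by
          have h2' : p.2 = l.2 := by rw [← hxp, hp1, hxl]
          exact Prod.ext hp1 h2'
        exact hl.2 (hpl ▸ hpF)
      have hb0 : (0 : ℝ) ≤ (K - (T.card : ℝ)) * (U.card : ℝ) / (2 * n) := by
        have h1' : (0:ℝ) ≤ K - (T.card : ℝ) := by linarith
        have h2' : (0:ℝ) ≤ (U.card : ℝ) := Nat.cast_nonneg _
        positivity
      have hcnt_ex : ∃ l ∈ FL, (K - (T.card : ℝ)) * (U.card : ℝ) / (2 * n) <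
          ((U.filter (fun M => l ∈ M)).card : ℝ) := by
        by_contra hcon
        push_neg at hcon
        have hsum1 : ∑ M ∈ U, (M \ F).card ≤
            ∑ l ∈ FL, (U.filter (fun M => l ∈ M)).card := by
          calc ∑ M ∈ U, (M \ F).card
              ≤ ∑ M ∈ U, (FL.filter (fun l => l ∈ M)).card := by
                apply Finset.sum_le_sum
                intro M hM
                apply Finset.card_le_card
                intro l hl
                exact Finset.mem_filter.mpr ⟨hMFL M hM hl, (Finset.mem_sdiff.mp hl).1⟩
            _ = ∑ l ∈ FL, (U.filter (fun M => l ∈ M)).card := by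
                simp_rw [Finset.card_filter]
                exact Finset.sum_comm
        have hsum2 : (K - (T.card : ℝ)) * (U.card : ℝ) <
            ∑ M ∈ U, ((M \ F).card : ℝ) := by
          have hlt := Finset.sum_lt_sum_of_nonempty hUne
            (f := fun _ => K - (T.card : ℝ)) (g := fun M => ((M \ F).card : ℝ))
            (fun M hM => hfin M hM)
          rw [Finset.sum_const, nsmul_eq_mul] at hlt
          calc (K - (T.card : ℝ)) * (U.card : ℝ)
              = (U.card : ℝ) * (K - (T.card : ℝ)) := by ring
            _ < _ := hlt
        have hFLcard : (FL.card : ℝ) ≤ 2 * n := by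
          have hfc : free.card ≤ n := by
            calc free.card ≤ (Finset.univ : Finset (Fin n)).card :=
                  Finset.card_le_card Finset.sdiff_subset
              _ = n := by simp
          have hfl : FL.card = free.card * 2 := by
            rw [hFLdef, Finset.card_product]
            simp
          have hfl2 : FL.card ≤ 2 * n := by omega
          exact_mod_cast hfl2
        have hc1 : (∑ M ∈ U, ((M \ F).card : ℝ)) ≤
            ∑ l ∈ FL, ((U.filter (fun M => l ∈ M)).card : ℝ) := by
          have := (Nat.cast_le (α := ℝ)).mpr hsum1
          push_cast at this
          exact this
        have hc2 : (∑ l ∈ FL, ((U.filter (fun M => l ∈ M)).card : ℝ)) ≤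
            (FL.card : ℝ) * ((K - (T.card : ℝ)) * (U.card : ℝ) / (2 * n)) := by
          have := Finset.sum_le_card_nsmul FL
            (fun l => ((U.filter (fun M => l ∈ M)).card : ℝ))
            ((K - (T.card : ℝ)) * (U.card : ℝ) / (2 * n))
            (fun l hl => hcon l hl)
          rwa [nsmul_eq_mul] at this
        have hc3 : (FL.card : ℝ) * ((K - (T.card : ℝ)) * (U.card : ℝ) / (2 * n)) ≤
            (2 * n) * ((K - (T.card : ℝ)) * (U.card : ℝ) / (2 * n)) :=
          mul_le_mul_of_nonneg_right hFLcard hb0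
        have hc4 : (2 * (n:ℝ)) * ((K - (T.card : ℝ)) * (U.card : ℝ) / (2 * n)) =
            (K - (T.card : ℝ)) * (U.card : ℝ) := by
          field_simp
        linarith
      obtain ⟨l, hlFL, hcnt⟩ := hcnt_ex
      have hcntpos : 0 < ((U.filter (fun M => l ∈ M)).card) := by
        rcases Nat.eq_zero_or_pos (U.filter (fun M => l ∈ M)).card with hc | hc
        · rw [hc] at hcnt
          norm_num at hcnt
          linarith
        · exact hc
      have hjfree : l.1 ∈ free := (Finset.mem_product.mp hlFL).1
      have hjnotim : l.1 ∉ F.image Prod.fst := (Finset.mem_sdiff.mp hjfree).2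
      by_cases hB : ∃ x, covers T x ∧ f x = some true ∧ x l.1 = !l.2
      · -- B-step: add the literal (l.1, !l.2), killing all terms containing l.
        obtain ⟨x, hxT, hxf, hxj⟩ := hB
        set T₂ := insert (l.1, !l.2) T with hT2def
        set F₂ := insert (l.1, !l.2) F with hF2def
        have hl'T : (l.1, !l.2) ∉ T := fun hmem =>
          hjnotim (Finset.mem_image.mpr ⟨_, h0 hmem, rfl⟩)
        have hcard2 : T₂.card = T.card + 1 := Finset.card_insert_of_notMem hl'T
        have h0' : T₂ ⊆ F₂ := Finset.insert_subset_insert _ h0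
        have h1' : ∃ a, covers T₂ a ∧ f a = some true := by
          refine ⟨x, ?_, hxf⟩
          intro p hp
          rcases Finset.mem_insert.mp hp with h | h
          · subst h; exact hxj
          · exact hxT p h
        have h2' : ∀ p ∈ F₂, ∀ y, covers T₂ y → f y = some true → y p.1 = p.2 := by
          intro p hp y hyT hyf
          rcases Finset.mem_insert.mp hp with h | h
          · subst h; exact hyT _ (Finset.mem_insert_self _ _)
          · exact h2 p h y (fun q hq => hyT q (Finset.mem_insert_of_mem hq)) hyf
        have hU2sub : useful φ f T₂ ⊆ U.filter (fun M => l ∉ M) := by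
          intro M hM
          obtain ⟨hMφ, y, hyM, hyT, hyf⟩ := Finset.mem_filter.mp hM
          refine Finset.mem_filter.mpr ⟨Finset.mem_filter.mpr
            ⟨hMφ, y, hyM, fun q hq => hyT q (Finset.mem_insert_of_mem hq), hyf⟩, ?_⟩
          intro hlM
          have e1 := hyM l hlM
          have e2 := hyT _ (Finset.mem_insert_self (l.1, !l.2) T)
          rw [e1] at e2
          simp at e2
        have hsplit := Finset.card_filter_add_card_filter_not
          (s := U) (p := fun M => l ∈ M)
        have hcardU2 : (useful φ f T₂).card + (U.filter (fun M => l ∈ M)).card ≤ U.card := by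
          have := Finset.card_le_card hU2sub
          omega
        -- the real-arithmetic chain
        have hmR : (0:ℝ) ≤ (U.card : ℝ) := Nat.cast_nonneg _
        have hstep1 : ((useful φ f T₂).card : ℝ) ≤
            (U.card : ℝ) - ((U.filter (fun M => l ∈ M)).card : ℝ) := by
          have := (Nat.cast_le (α := ℝ)).mpr hcardU2
          push_cast at this
          linarith
        have hstep2 : (U.card : ℝ) - ((U.filter (fun M => l ∈ M)).card : ℝ) <
            (U.card : ℝ) * (1 - (K - (T.card : ℝ)) / (2 * n)) := by
          have e : (K - (T.card : ℝ)) * (U.card : ℝ) / (2 * n) =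
              (U.card : ℝ) * ((K - (T.card : ℝ)) / (2 * n)) := by ring
          rw [e] at hcnt
          nlinarith [hcnt]
        have hstep3 : (U.card : ℝ) * (1 - (K - (T.card : ℝ)) / (2 * n)) ≤
            (U.card : ℝ) * Real.exp (-((K - (T.card : ℝ)) / (2 * n))) := by
          apply mul_le_mul_of_nonneg_left _ hmR
          have := Real.add_one_le_exp (-((K - (T.card : ℝ)) / (2 * n)))
          linarith
        have hstep4 : (U.card : ℝ) * Real.exp (-((K - (T.card : ℝ)) / (2 * n))) ≤
            (s * Real.exp (-(((T.card : ℝ) * K - (T.card : ℝ) * ((T.card : ℝ) - 1) / 2) / (2 * n))))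
              * Real.exp (-((K - (T.card : ℝ)) / (2 * n))) :=
          mul_le_mul_of_nonneg_right h3 (Real.exp_nonneg _)
        have hn0 : (n : ℝ) ≠ 0 := by positivity
        have hstep5 : (s * Real.exp (-(((T.card : ℝ) * K - (T.card : ℝ) * ((T.card : ℝ) - 1) / 2) / (2 * n))))
              * Real.exp (-((K - (T.card : ℝ)) / (2 * n))) =
            s * Real.exp (-((((T.card : ℝ) + 1) * K -
              ((T.card : ℝ) + 1) * (((T.card : ℝ) + 1) - 1) / 2) / (2 * n))) := by
          rw [mul_assoc, ← Real.exp_add]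
          congr 1
          field_simp
          ring
        have h3' : ((useful φ f T₂).card : ℝ) ≤
            s * Real.exp (-(((T₂.card : ℝ) * K - (T₂.card : ℝ) * ((T₂.card : ℝ) - 1) / 2) / (2 * n))) := by
          have hic : ((T₂.card : ℝ)) = (T.card : ℝ) + 1 := by
            rw [hcard2]; push_cast; ring
          rw [hic, ← hstep5]
          exact le_of_lt (lt_of_le_of_lt hstep1
            (lt_of_lt_of_le hstep2 (le_trans hstep3 hstep4)))
        have h4' : ((T₂.card : ℝ)) < K + 1 := by
          rw [hcard2]
          push_cast
          linarith
        have hmeas : (useful φ f T₂).card * (n + 1) +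
            (n - (F₂.image Prod.fst).card) < μ := by
          have h6 : (useful φ f T₂).card + 1 ≤ U.card := by omega
          have h7 : n - (F₂.image Prod.fst).card ≤ n := Nat.sub_le _ _
          have e2 : ((useful φ f T₂).card + 1) * (n + 1) ≤ U.card * (n + 1) :=
            Nat.mul_le_mul_right _ h6
          calc (useful φ f T₂).card * (n + 1) + (n - (F₂.image Prod.fst).card)
              ≤ (useful φ f T₂).card * (n + 1) + n := Nat.add_le_add_left h7 _
            _ < (useful φ f T₂).card * (n + 1) + (n + 1) :=
                Nat.add_lt_add_left (Nat.lt_succ_self n) _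
            _ = ((useful φ f T₂).card + 1) * (n + 1) := by ring
            _ ≤ U.card * (n + 1) := e2
            _ ≤ U.card * (n + 1) + (n - (F.image Prod.fst).card) := Nat.le_add_right _ _
            _ ≤ μ := h5
        exact IH _ hmeas T₂ F₂ h0' h1' h2' h3' h4' le_rfl
      · -- A-step: all positives covering T agree with literal l; force it into F.
        have hA : ∀ y, covers T y → f y = some true → y l.1 = l.2 := by
          intro y hyT hyf
          by_contra hne
          refine hB ⟨y, hyT, hyf, ?_⟩
          revert hne
          cases hyl : y l.1 <;> cases hl2 : l.2 <;> simp
        have h0' : T ⊆ insert l F := h0.trans (Finset.subset_insert _ _)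
        have h2' : ∀ p ∈ insert l F, ∀ y, covers T y → f y = some true → y p.1 = p.2 := by
          intro p hp y hyT hyf
          rcases Finset.mem_insert.mp hp with h | h
          · subst h; exact hA y hyT hyf
          · exact h2 p h y hyT hyf
        have himcard : ((insert l F).image Prod.fst).card = (F.image Prod.fst).card + 1 := by
          rw [Finset.image_insert]
          exact Finset.card_insert_of_notMem hjnotim
        have himle : (F.image Prod.fst).card + 1 ≤ n := by
          have hsub : insert l.1 (F.image Prod.fst) ⊆ (Finset.univ : Finset (Fin n)) :=
            Finset.subset_univ _
          have hcle := Finset.card_le_card hsub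
          rw [Finset.card_insert_of_notMem hjnotim, Finset.card_univ, Fintype.card_fin] at hcle
          exact hcle
        have hmeas : (useful φ f T).card * (n + 1) +
            (n - ((insert l F).image Prod.fst).card) < μ := by
          show U.card * (n + 1) + (n - ((insert l F).image Prod.fst).card) < μ
          rw [himcard]
          omega
        exact IH _ hmeas T (insert l F) h0' h1 h2' h3 h4 le_rfl
    · -- |T| ≥ K : contradiction via the potential bound.
      exfalso
      push_neg at hiK
      have hKsq : K ^ 2 = 4 * (n : ℝ) * L := by
        rw [hK, mul_pow]
        rw [sq (Real.sqrt _), Real.mul_self_sqrt (by positivity)]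
        ring
      have hE : L * (2 * (n : ℝ)) < (T.card : ℝ) * K - (T.card : ℝ) * ((T.card : ℝ) - 1) / 2 := by
        have hhint : (0:ℝ) ≤ ((T.card : ℝ) - K) * (K + 1 - (T.card : ℝ)) :=
          mul_nonneg (by linarith) (by linarith)
        have e1 : (T.card : ℝ) * K - (T.card : ℝ) * ((T.card : ℝ) - 1) / 2 =
            (((T.card : ℝ) - K) * (K + 1 - (T.card : ℝ)) + K + K ^ 2) / 2 := by ring
        have e2 : L * (2 * (n : ℝ)) = K ^ 2 / 2 := by linarith [hKsq]
        linarith [hhint, hKpos, e1, e2]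
      have hlt : L < ((T.card : ℝ) * K - (T.card : ℝ) * ((T.card : ℝ) - 1) / 2) / (2 * n) :=
        (lt_div_iff₀ h2n).mpr (by linarith)
      have hexp : Real.exp (-(((T.card : ℝ) * K - (T.card : ℝ) * ((T.card : ℝ) - 1) / 2) / (2 * n))) <
          Real.exp (-L) := Real.exp_lt_exp.mpr (by linarith)
      have hsl : (s : ℝ) * Real.exp (-L) = 1 := by
        rw [hL, Real.exp_neg, Real.exp_log (by linarith)]
        field_simp
      have hfinal : ((useful φ f T).card : ℝ) < 1 := by
        calc ((useful φ f T).card : ℝ)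
            ≤ s * Real.exp (-(((T.card : ℝ) * K - (T.card : ℝ) * ((T.card : ℝ) - 1) / 2) / (2 * n))) := h3
          _ < s * Real.exp (-L) := by
              exact mul_lt_mul_of_pos_left hexp (by linarith)
          _ = 1 := hsl
      linarith

/-- **Seed lemma for DNF.** If the partial function `f` has a positive example and is
consistent with a DNF formula with `s` terms, then `f` has a seed of size at most
`2 √(n ln s)`: a monomial `T` covering a positive example of `f` such that the
projection `f_T` (the restriction of `f` to assignments satisfying `T`) is consistent
with a single monomial `M`. -/
theorem seed_lemma_for_DNF {n s : ℕ} (f : (Fin n → Bool) → Option Bool)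
    (hpos : ∃ a, f a = some true)
    (φ : Finset (Finset (Fin n × Bool))) (hcard : φ.card = s)
    (hcons : consistentDNF φ f) :
    ∃ T : Finset (Fin n × Bool),
      (T.card : ℝ) ≤ 2 * Real.sqrt (n * Real.log s) ∧
      (∃ x, covers T x ∧ f x = some true) ∧
      (∃ M : Finset (Fin n × Bool), ∀ x, covers T x →
        (f x = some true → covers M x) ∧ (f x = some false → ¬ covers M x)) := by
  obtain ⟨a, ha⟩ := hpos
  rcases Nat.lt_or_ge s 2 with hs | hs
  · interval_cases s
    · -- s = 0 : impossible, positives need a covering term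
      exfalso
      have hφ : φ = ∅ := Finset.card_eq_zero.mp hcard
      obtain ⟨M, hM, _⟩ := (hcons a).1 ha
      rw [hφ] at hM
      exact absurd hM (Finset.notMem_empty _)
    · -- s = 1 : take T = ∅ and M the unique term
      obtain ⟨M₀, hφ⟩ := Finset.card_eq_one.mp hcard
      refine ⟨∅, ?_, ⟨a, fun p hp => absurd hp (Finset.notMem_empty _), ha⟩, ⟨M₀, ?_⟩⟩
      · simp
      · intro x _
        constructor
        · intro hxf
          obtain ⟨M, hM, hMx⟩ := (hcons x).1 hxf
          rw [hφ, Finset.mem_singleton] at hM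
          exact hM ▸ hMx
        · intro hxf hMx
          exact (hcons x).2 hxf ⟨M₀, by rw [hφ]; exact Finset.mem_singleton_self _, hMx⟩
  · -- s ≥ 2 : run the greedy seed-finding process
    refine seed_aux f φ hcard hcons (2 * Real.sqrt (n * Real.log s)) (Real.log s)
      rfl rfl hs ((useful φ f ∅).card * (n + 1) + n) ∅ ∅ (Finset.Subset.refl _)
      ⟨a, fun p hp => absurd hp (Finset.notMem_empty _), ha⟩
      (fun l hl => absurd hl (Finset.notMem_empty _)) ?_ ?_ ?_
    · have hU : ((useful φ f ∅).card : ℝ) ≤ s := by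
        have := Finset.card_le_card (Finset.filter_subset
          (fun M => ∃ x : Fin n → Bool, covers M x ∧ covers ∅ x ∧ f x = some true) φ)
        rw [hcard] at this
        exact_mod_cast this
      simpa using hU
    · show (((∅ : Finset (Fin n × Bool)).card : ℝ)) < 2 * Real.sqrt (n * Real.log s) + 1
      simp only [Finset.card_empty, Nat.cast_zero]
      positivity
    · simp
end

section
/- Let f be a partial Boolean function on {0,1}^n that takes value 1 on at least one point, and suppose f is consistent with a decision tree having s₁ leaves labeled 1. Then f has a seed of size at most log₂ s₁: there is a monomial Q with at most log₂ s₁ literals covering a positive example of f such that the projection f_Q is consistent with a monomial. -/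
/-- Binary decision trees over variables `x_1, ..., x_n`. -/
inductive DTree (n : ℕ) where
  | leaf : Bool → DTree n
  | node : Fin n → DTree n → DTree n → DTree n

/-- Evaluation of a decision tree on an assignment. -/
def DTree.eval {n : ℕ} : DTree n → (Fin n → Bool) → Bool
  | .leaf b, _ => b
  | .node i t0 t1, x => if x i then (t1.eval x) else (t0.eval x)

/-- Number of leaves labeled 1. -/
def DTree.ones {n : ℕ} : DTree n → ℕ
  | .leaf b => if b then 1 else 0
  | .node _ t0 t1 => t0.ones + t1.ones

lemma covers_mono {n : ℕ} {Q Q' : Finset (Fin n × Bool)} (h : Q ⊆ Q')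
    {x : Fin n → Bool} (hx : covers Q' x) : covers Q x := fun l hl => hx l (h hl)

def DTree.child {n : ℕ} (t0 t1 : DTree n) : Bool → DTree n :=
  fun b => bif b then t1 else t0

@[simp] lemma DTree.child_false {n : ℕ} (t0 t1 : DTree n) :
    DTree.child t0 t1 false = t0 := rfl

@[simp] lemma DTree.child_true {n : ℕ} (t0 t1 : DTree n) :
    DTree.child t0 t1 true = t1 := rfl

lemma seed_aux_s1 {n : ℕ} (f : (Fin n → Bool) → Option Bool) :
    ∀ (t : DTree n) (Q P : Finset (Fin n × Bool)),
      Q ⊆ P →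
      (∀ x, f x = some true → covers Q x → covers P x) →
      (∀ x b, f x = some b → covers P x → t.eval x = b) →
      (∃ x, covers Q x ∧ f x = some true) →
      ∃ Q' M : Finset (Fin n × Bool), Q ⊆ Q' ∧
        2 ^ (Q'.card - Q.card) ≤ t.ones ∧
        (∃ x, covers Q' x ∧ f x = some true) ∧
        (∀ x, covers Q' x →
          (f x = some true → covers M x) ∧ (f x = some false → ¬ covers M x)) := by
  intro t
  induction t with
  | leaf b =>
    intro Q P hQP H1 H2 Hex
    obtain ⟨x, hxQ, hxf⟩ := Hex
    have hb : b = true := by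
      have := H2 x true hxf (H1 x hxf hxQ)
      simpa [DTree.eval] using this
    subst hb
    refine ⟨Q, P, subset_rfl, ?_, ⟨x, hxQ, hxf⟩, ?_⟩
    · simp [DTree.ones]
    · intro y hyQ
      refine ⟨fun hy => H1 y hy hyQ, fun hy hyP => ?_⟩
      have := H2 y false hy hyP
      simp [DTree.eval] at this
  | node i t0 t1 IH0 IH1 =>
    intro Q P hQP H1 H2 Hex
    set c : Bool := decide (t1.ones ≤ t0.ones) with hc
    have heval : ∀ x : Fin n → Bool,
        (DTree.node i t0 t1).eval x = (DTree.child t0 t1 (x i)).eval x := by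
      intro x; cases hxi : x i <;> simp [DTree.eval, hxi]
    have hones : ∀ b : Bool, (DTree.child t0 t1 b).ones ≤ t0.ones + t1.ones := by
      intro b; cases b <;> simp [DTree.child]
    have hsmall : 2 * (DTree.child t0 t1 c).ones ≤ t0.ones + t1.ones := by
      rcases le_or_gt t1.ones t0.ones with h | h
      · have : c = true := by simp [hc, h]
        rw [this]; simp [DTree.child]; omega
      · have : c = false := by simp [hc]; omega
        rw [this]; simp [DTree.child]; omega
    have IH : ∀ b : Bool, ∀ Q P : Finset (Fin n × Bool),
        Q ⊆ P →
        (∀ x, f x = some true → covers Q x → covers P x) →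
        (∀ x b', f x = some b' → covers P x → (DTree.child t0 t1 b).eval x = b') →
        (∃ x, covers Q x ∧ f x = some true) →
        ∃ Q' M : Finset (Fin n × Bool), Q ⊆ Q' ∧
          2 ^ (Q'.card - Q.card) ≤ (DTree.child t0 t1 b).ones ∧
          (∃ x, covers Q' x ∧ f x = some true) ∧
          (∀ x, covers Q' x →
            (f x = some true → covers M x) ∧ (f x = some false → ¬ covers M x)) := by
      intro b
      cases b
      · simpa [DTree.child] using IH0
      · simpa [DTree.child] using IH1
    by_cases ha : ∃ x, covers (insert (i, c) Q) x ∧ f x = some true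
    · -- descend into the smaller DTree.child t0 t1, recording the literal
      obtain ⟨Q'', M, hsub, hbound, hex, hM⟩ :=
        IH c (insert (i, c) Q) (insert (i, c) P)
          (Finset.insert_subset_insert _ hQP)
          (by
            intro x hx hxQ'
            intro l hl
            rcases Finset.mem_insert.mp hl with rfl | hl
            · exact hxQ' (i, c) (Finset.mem_insert_self _ _)
            · exact H1 x hx (covers_mono (Finset.subset_insert _ _) hxQ') l hl)
          (by
            intro x b' hx hxP'
            have hxi : x i = c := hxP' (i, c) (Finset.mem_insert_self _ _)
            have h2 := H2 x b' hx (covers_mono (Finset.subset_insert _ _) hxP')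
            rw [heval, hxi] at h2; exact h2)
          ha
      refine ⟨Q'', M, (Finset.subset_insert _ _).trans hsub, ?_, hex, hM⟩
      by_cases hmem : (i, c) ∈ Q
      · rw [Finset.insert_eq_self.mpr hmem] at hbound
        calc 2 ^ (Q''.card - Q.card) ≤ (DTree.child t0 t1 c).ones := hbound
          _ ≤ (DTree.node i t0 t1).ones := by simpa [DTree.ones] using hones c
      · have hcard : (insert (i, c) Q).card = Q.card + 1 :=
          Finset.card_insert_of_notMem hmem
        have hle : Q.card + 1 ≤ Q''.card := by
          have := Finset.card_le_card hsub
          omega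
        have : 2 ^ (Q''.card - Q.card) = 2 * 2 ^ (Q''.card - (Q.card + 1)) := by
          rw [← pow_succ']
          congr 1
          omega
        rw [this]
        rw [hcard] at hbound
        calc 2 * 2 ^ (Q''.card - (Q.card + 1)) ≤ 2 * (DTree.child t0 t1 c).ones := by omega
          _ ≤ (DTree.node i t0 t1).ones := by simpa [DTree.ones] using hsmall
    · -- forced into the other DTree.child t0 t1; don't record the literal in Q
      have hforce : ∀ x, covers Q x → f x = some true → x i = !c := by
        intro x hxQ hx
        by_contra hne
        have hxi : x i = c := by revert hne; cases x i <;> cases c <;> simp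
        exact ha ⟨x, by
          intro l hl
          rcases Finset.mem_insert.mp hl with rfl | hl
          · exact hxi
          · exact hxQ l hl, hx⟩
      obtain ⟨Q'', M, hsub, hbound, hex, hM⟩ :=
        IH (!c) Q (insert (i, !c) P)
          (hQP.trans (Finset.subset_insert _ _))
          (by
            intro x hx hxQ
            intro l hl
            rcases Finset.mem_insert.mp hl with rfl | hl
            · exact hforce x hxQ hx
            · exact H1 x hx hxQ l hl)
          (by
            intro x b' hx hxP'
            have hxi : x i = !c := hxP' (i, !c) (Finset.mem_insert_self _ _)
            have h2 := H2 x b' hx (covers_mono (Finset.subset_insert _ _) hxP')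
            rw [heval, hxi] at h2; exact h2)
          Hex
      refine ⟨Q'', M, hsub, ?_, hex, hM⟩
      calc 2 ^ (Q''.card - Q.card) ≤ (DTree.child t0 t1 !c).ones := hbound
        _ ≤ (DTree.node i t0 t1).ones := by simpa [DTree.ones] using hones (!c)

/-- **Seed lemma for decision trees.** If the partial function `f` has a positive
example and is consistent with a decision tree `J` having `s₁` leaves labeled 1, then
`f` has a seed of size at most `log₂ s₁`: a monomial `Q` with at most `log₂ s₁`
literals covering a positive example of `f`, such that the projection `f_Q` is
consistent with a monomial `M`. -/
theorem seed_lemma_for_decision_trees {n : ℕ} (f : (Fin n → Bool) → Option Bool)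
    (J : DTree n)
    (hcons : ∀ x b, f x = some b → J.eval x = b)
    (hpos : ∃ a, f a = some true) :
    ∃ Q : Finset (Fin n × Bool),
      (Q.card : ℝ) ≤ Real.logb 2 (J.ones) ∧
      (∃ x, covers Q x ∧ f x = some true) ∧
      (∃ M : Finset (Fin n × Bool), ∀ x, covers Q x →
        (f x = some true → covers M x) ∧ (f x = some false → ¬ covers M x)) := by
  obtain ⟨a, ha⟩ := hpos
  have hcov : covers (∅ : Finset (Fin n × Bool)) a := fun l hl => by simp at hl
  obtain ⟨Q, M, _, hbound, hex, hM⟩ :=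
    seed_aux_s1 f J ∅ ∅ subset_rfl (fun x _ h => h) (fun x b hx _ => hcons x b hx)
      ⟨a, hcov, ha⟩
  refine ⟨Q, ?_, hex, ⟨M, hM⟩⟩
  simp only [Nat.sub_zero, Finset.card_empty] at hbound
  have h2 : (2 : ℝ) ^ Q.card ≤ (J.ones : ℝ) := by
    exact_mod_cast hbound
  have := Real.logb_le_logb_of_le (b := 2) (by norm_num) (by positivity) h2
  calc (Q.card : ℝ) = Real.logb 2 (2 ^ Q.card) := by
        rw [Real.logb_pow, Real.logb_self_eq_one (by norm_num)]
        ring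
    _ ≤ Real.logb 2 (J.ones) := this
end

section
/- Let M(n,t,s) be the set of monotone DNF formulas with exactly t distinct terms, each containing exactly s distinct variables out of n. Let z ∈ {0,1}^n with t ≤ C(n,s) − C(|z|,s). If φ is drawn uniformly at random from M(n,t,s), then Pr[φ(z)=0] ≤ (1 − ((|z|−s)/n)^s)^t. -/
/- Writing `A` for the family of all `s`-subsets and `B ⊆ A` for those that contain
a zero of `z`, the formulas with `φ(z) = 0` are the `t`-subsets of `B`, so the probability is
`C(|B|, t) / C(|A|, t) ≤ (|B| / |A|)^t`. Here `|A| - |B| = C(|z|, s)`, and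
`C(|z|, s) / C(n, s) = ∏_{i < s} (|z| - i) / (n - i) ≥ ((|z| - s) / n)^s`. -/

/-- Hamming weight of an assignment. -/
def wt {n : ℕ} (z : Fin n → Bool) : ℕ :=
  (Finset.univ.filter (fun i => z i = true)).card

open Finset

theorem Nat.descFactorial_mul_pow_le_of_le {a b : ℕ} (hab : a ≤ b) (k : ℕ) :
    a.descFactorial k * b ^ k ≤ b.descFactorial k * a ^ k := by
  induction k with
  | zero => simp
  | succ k ih =>
    have hstep : (a - k) * b ≤ (b - k) * a := by
      rw [Nat.sub_mul, Nat.sub_mul, Nat.mul_comm a b]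
      exact Nat.sub_le_sub_left (Nat.mul_le_mul_left k hab) _
    calc a.descFactorial (k + 1) * b ^ (k + 1)
        = ((a - k) * b) * (a.descFactorial k * b ^ k) := by
          rw [Nat.descFactorial_succ, pow_succ]; ring
      _ ≤ ((b - k) * a) * (b.descFactorial k * a ^ k) := Nat.mul_le_mul hstep ih
      _ = b.descFactorial (k + 1) * a ^ (k + 1) := by
          rw [Nat.descFactorial_succ, pow_succ]; ring

theorem Nat.choose_mul_pow_le_of_le {a b : ℕ} (hab : a ≤ b) (k : ℕ) :
    a.choose k * b ^ k ≤ b.choose k * a ^ k := by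
  have h := Nat.descFactorial_mul_pow_le_of_le hab k
  rw [Nat.descFactorial_eq_factorial_mul_choose, Nat.descFactorial_eq_factorial_mul_choose,
    mul_assoc, mul_assoc] at h
  exact Nat.le_of_mul_le_mul_left h k.factorial_pos

theorem Nat.sub_pow_mul_descFactorial_le {k s : ℕ} (hks : k ≤ s) (w n : ℕ) :
    (w - s) ^ k * n.descFactorial k ≤ w.descFactorial k * n ^ k := by
  induction k with
  | zero => simp
  | succ k ih =>
    have hstep : (w - s) * (n - k) ≤ (w - k) * n :=
      Nat.mul_le_mul (Nat.sub_le_sub_left (by omega) w) (Nat.sub_le n k)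
    calc (w - s) ^ (k + 1) * n.descFactorial (k + 1)
        = ((w - s) * (n - k)) * ((w - s) ^ k * n.descFactorial k) := by
          rw [Nat.descFactorial_succ, pow_succ]; ring
      _ ≤ ((w - k) * n) * (w.descFactorial k * n ^ k) := Nat.mul_le_mul hstep (ih (by omega))
      _ = w.descFactorial (k + 1) * n ^ (k + 1) := by
          rw [Nat.descFactorial_succ, pow_succ]; ring

theorem Nat.sub_pow_mul_choose_le (s w n : ℕ) :
    (w - s) ^ s * n.choose s ≤ w.choose s * n ^ s := by
  have h := Nat.sub_pow_mul_descFactorial_le (le_refl s) w n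
  rw [Nat.descFactorial_eq_factorial_mul_choose, Nat.descFactorial_eq_factorial_mul_choose,
    mul_left_comm, mul_assoc] at h
  exact Nat.le_of_mul_le_mul_left h s.factorial_pos

theorem Nat.cast_choose_div_cast_choose_le_pow {a b : ℕ} (hab : a ≤ b) (k : ℕ) :
    (a.choose k : ℝ) / b.choose k ≤ ((a : ℝ) / b) ^ k := by
  rcases (b.choose k).eq_zero_or_pos with hb | hb
  · rw [hb, Nat.cast_zero, div_zero]
    positivity
  have hbk : 0 < b ^ k := by
    rcases k.eq_zero_or_pos with rfl | hk
    · simp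
    · refine pow_pos (Nat.pos_of_ne_zero ?_) k
      rintro rfl
      exact hb.ne' (Nat.choose_eq_zero_of_lt hk)
  rw [div_pow, div_le_div_iff₀ (by exact_mod_cast hb) (by exact_mod_cast hbk),
    mul_comm ((a : ℝ) ^ k)]
  exact_mod_cast Nat.choose_mul_pow_le_of_le hab k

theorem sub_div_pow_le_cast_choose_div_cast_choose {s w n : ℕ} (hsw : s ≤ w) (hsn : s ≤ n) :
    (((w : ℝ) - s) / n) ^ s ≤ (w.choose s : ℝ) / n.choose s := by
  have hns : 0 < n ^ s := by
    rcases s.eq_zero_or_pos with rfl | hs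
    · simp
    · exact pow_pos (by omega) s
  rw [← Nat.cast_sub hsw, div_pow,
    div_le_div_iff₀ (by exact_mod_cast hns) (by exact_mod_cast Nat.choose_pos hsn)]
  exact_mod_cast Nat.sub_pow_mul_choose_le s w n

namespace Finset

variable {α : Type*}

theorem filter_powersetCard_forall (A : Finset α) (p : α → Prop) [DecidablePred p]
    [DecidablePred fun φ : Finset α => ∀ T ∈ φ, p T] (t : ℕ) :
    (A.powersetCard t).filter (fun φ => ∀ T ∈ φ, p T) = (A.filter p).powersetCard t := by
  ext φ
  simp only [mem_filter, mem_powersetCard, subset_iff]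
  grind

theorem cast_card_filter_powersetCard_forall_div_le (A : Finset α) (p : α → Prop)
    [DecidablePred p] [DecidablePred fun φ : Finset α => ∀ T ∈ φ, p T] (t : ℕ) :
    (#((A.powersetCard t).filter (fun φ => ∀ T ∈ φ, p T)) : ℝ) / #(A.powersetCard t) ≤
      ((#(A.filter p) : ℝ) / #A) ^ t := by
  rw [filter_powersetCard_forall, card_powersetCard, card_powersetCard]
  exact Nat.cast_choose_div_cast_choose_le_pow (card_filter_le A p) t

theorem card_filter_powersetCard_not_subset [DecidableEq α] {S U : Finset α} (hSU : S ⊆ U)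
    (s : ℕ) :
    #((U.powersetCard s).filter (fun T => ¬ T ⊆ S)) = (#U).choose s - (#S).choose s := by
  have hsub : (U.powersetCard s).filter (· ⊆ S) = S.powersetCard s := by
    ext T
    simp only [mem_filter, mem_powersetCard]
    exact ⟨fun ⟨⟨_, hT⟩, hTS⟩ => ⟨hTS, hT⟩,
      fun ⟨hTS, hT⟩ => ⟨⟨hTS.trans hSU, hT⟩, hTS⟩⟩
  have hsum := card_filter_add_card_filter_not (s := U.powersetCard s) (· ⊆ S)
  rw [hsub, card_powersetCard, card_powersetCard] at hsum
  omega

end Finset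

theorem stmt10_general {n t s : ℕ} (z : Fin n → Bool) (hs : s ≤ wt z) :
    ((((Finset.powersetCard s (Finset.univ : Finset (Fin n))).powersetCard t).filter
        (fun φ => ∀ T ∈ φ, ∃ i ∈ T, z i = false)).card : ℝ) /
      ((((Finset.powersetCard s (Finset.univ : Finset (Fin n))).powersetCard t)).card : ℝ) ≤
    (1 - (((wt z : ℝ) - (s : ℝ)) / (n : ℝ)) ^ s) ^ t := by
  set S : Finset (Fin n) := univ.filter (z · = true)
  have hwn : wt z ≤ n := (card_le_univ S).trans_eq (Fintype.card_fin n)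
  have hsn : s ≤ n := hs.trans hwn
  have hmiss : #((powersetCard s univ).filter (fun T => ∃ i ∈ T, z i = false)) =
      n.choose s - (wt z).choose s := by
    have h := card_filter_powersetCard_not_subset (subset_univ S) s
    rw [card_univ, Fintype.card_fin] at h
    rw [show wt z = #S from rfl, ← h]
    refine congrArg card (filter_congr fun T _ => ?_)
    simp [S, subset_iff]
  have hN : (0 : ℝ) < n.choose s := by exact_mod_cast Nat.choose_pos hsn
  have hbase : (#((powersetCard s univ).filter (fun T => ∃ i ∈ T, z i = false)) : ℝ) /
      #(powersetCard s (univ : Finset (Fin n))) ≤ 1 - (((wt z : ℝ) - s) / n) ^ s := by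
    rw [hmiss, card_powersetCard, card_univ, Fintype.card_fin,
      Nat.cast_sub (Nat.choose_le_choose s hwn), sub_div, div_self hN.ne']
    linarith [sub_div_pow_le_cast_choose_div_cast_choose hs hsn]
  exact (cast_card_filter_powersetCard_forall_div_le _ _ t).trans
    (pow_le_pow_left₀ (by positivity) hbase t)

/-- Let `M(n,t,s)` be the set of monotone DNF formulas with exactly `t` distinct
monotone terms, each with exactly `s` distinct variables out of `n` (identified with
`t`-element subsets of the `s`-element subsets of the variables).  Let
`z ∈ {0,1}^n` with `s ≤ |z|` and `t ≤ C(n,s) - C(|z|,s)`.  If `φ` is drawn uniformly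
from `M(n,t,s)`, then `Pr[φ(z) = 0] ≤ (1 - ((|z|-s)/n)^s)^t`, where `φ(z) = 0` means
`z` satisfies no term of `φ`. -/
theorem stmt10 {n t s : ℕ} (z : Fin n → Bool) (hs : s ≤ wt z)
    (ht : t ≤ Nat.choose n s - Nat.choose (wt z) s) :
    ((((Finset.powersetCard s (Finset.univ : Finset (Fin n))).powersetCard t).filter
        (fun φ => ∀ T ∈ φ, ∃ i ∈ T, z i = false)).card : ℝ) /
      ((((Finset.powersetCard s (Finset.univ : Finset (Fin n))).powersetCard t)).card : ℝ) ≤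
    (1 - (((wt z : ℝ) - (s : ℝ)) / (n : ℝ)) ^ s) ^ t :=
  stmt10_general z hs
end

section
/- Let f_1,...,f_N be Boolean functions on {0,1}^n with N ≥ 1, and let Z ⊆ {0,1}^n be the set of assignments a such that min(|{i : f_i(a)=0}|, |{i : f_i(a)=1}|) < N/n^k. Fix t ≥ 1 with C(t, ⌈t/2⌉) · (1/n^k)^{t/2} < 1/2^n (for instance t = 3n/(k log n) when 1 ≤ k ≤ n, n large). Then there exist indices i_1,...,i_t ∈ {1,...,N} such that the function Maj(f_{i_1},...,f_{i_t}) agrees with Maj(f_1,...,f_N) on every assignment a ∈ Z. -/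
/-!
Sample `g : Fin t → Fin N` uniformly. At a point `a ∈ Z` the minority value of the `f i a`
has density `x < 1/n^k`, and the sampled majority can only be wrong if at least `⌈t/2⌉` of the
samples fall into that minority; choosing which `⌈t/2⌉` coordinates do so bounds the probability
by `C(t, ⌈t/2⌉) x^⌈t/2⌉ ≤ C(t, ⌈t/2⌉) (1/n^k)^(t/2) < 2^(-n)`. A union bound over the at most
`2^n` points of `Z` leaves a sample that is right everywhere on `Z`.
-/

open Finset

section Counting

variable {κ ι : Type*} [Fintype κ] [Fintype ι] [DecidableEq κ]

lemma card_piFinset_ite_mem (S : Finset κ) (M : Finset ι) :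
    #(Fintype.piFinset fun j => if j ∈ S then M else univ) =
      #M ^ #S * Fintype.card ι ^ (Fintype.card κ - #S) := by
  rw [Fintype.card_piFinset]
  simp only [apply_ite card, card_univ]
  rw [Finset.prod_ite]
  simp [Finset.filter_not, Finset.card_sdiff]

/-- A function hitting `M` at least `c` times hits it on some `c`-subset of its domain. -/
lemma card_funs_hitting_le [DecidableEq ι] (M : Finset ι) (c : ℕ) :
    #{g : κ → ι | c ≤ #{j | g j ∈ M}} ≤
      (Fintype.card κ).choose c * (#M ^ c * Fintype.card ι ^ (Fintype.card κ - c)) := by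
  calc #{g : κ → ι | c ≤ #{j | g j ∈ M}}
      ≤ #((univ.powersetCard c).biUnion
          fun S => Fintype.piFinset fun j => if j ∈ S then M else univ) := by
        refine card_le_card fun g hg => ?_
        obtain ⟨S, hSM, hS⟩ := exists_subset_card_eq (mem_filter.mp hg).2
        refine mem_biUnion.mpr ⟨S, mem_powersetCard.mpr ⟨subset_univ S, hS⟩, ?_⟩
        refine Fintype.mem_piFinset.mpr fun j => ?_
        split_ifs with hj
        · exact (mem_filter.mp (hSM hj)).2
        · exact mem_univ _
    _ ≤ ∑ S ∈ univ.powersetCard c,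
          #(Fintype.piFinset fun j => if j ∈ S then M else univ) := card_biUnion_le
    _ = (Fintype.card κ).choose c * (#M ^ c * Fintype.card ι ^ (Fintype.card κ - c)) := by
        rw [sum_congr rfl fun S hS => by rw [card_piFinset_ite_mem, (mem_powersetCard.mp hS).2],
          sum_const, card_powersetCard, card_univ, smul_eq_mul]

end Counting

lemma pow_le_rpow_half {x : ℝ} (hx0 : 0 ≤ x) (hx1 : x ≤ 1) (t : ℕ) :
    x ^ ((t + 1) / 2) ≤ x ^ ((t : ℝ) / 2) := by
  rw [← Real.rpow_natCast]
  refine Real.rpow_le_rpow_of_exponent_ge' hx0 hx1 (by positivity) ?_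
  rw [div_le_iff₀ two_pos]
  exact_mod_cast (by omega : t ≤ (t + 1) / 2 * 2)

section Majority

variable {κ ι : Type*} [Fintype κ] [Fintype ι]

def IsMajority (p : ι → Bool) : Prop :=
  Fintype.card ι ≤ 2 * #{i | p i = true}

instance (p : ι → Bool) : Decidable (IsMajority p) := Nat.decLe _ _

/-- The losing side of the vote; a tie counts as a win for `true`. -/
def minority (p : ι → Bool) : Finset ι :=
  if IsMajority p then univ.filter (p · = false) else univ.filter (p · = true)

lemma card_filter_eq_false_add_card_filter_eq_true (p : ι → Bool) :
    #{i | p i = false} + #{i | p i = true} = Fintype.card ι := by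
  rw [add_comm, ← card_univ, ← card_filter_add_card_filter_not (s := univ) (p · = true)]
  simp only [Bool.not_eq_true]

lemma card_minority (p : ι → Bool) :
    #(minority p) = min #{i | p i = false} #{i | p i = true} := by
  have := card_filter_eq_false_add_card_filter_eq_true p
  unfold minority
  split_ifs with hp <;> unfold IsMajority at hp <;> omega

lemma le_card_filter_mem_minority [DecidableEq ι] {p : ι → Bool} {g : κ → ι}
    (h : ¬(IsMajority (p ∘ g) ↔ IsMajority p)) :
    (Fintype.card κ + 1) / 2 ≤ #{j | g j ∈ minority p} := by
  have hsplit := card_filter_eq_false_add_card_filter_eq_true (p ∘ g)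
  unfold minority
  split_ifs with hp <;> simp only [hp, iff_true, iff_false, not_not] at h <;>
    unfold IsMajority at h <;>
    simp only [mem_filter, mem_univ, true_and, Function.comp_apply] at h hsplit ⊢ <;> omega

/-- Counting form of `P(Maj(p ∘ g) ≠ Maj p) ≤ C(t, ⌈t/2⌉) x^(t/2)` for `g` uniform and a
minority of density `x`. -/
lemma card_majority_disagreeing_samples_le [DecidableEq κ] [DecidableEq ι] [Nonempty ι]
    (p : ι → Bool) :
    (#{g : κ → ι | ¬(IsMajority (p ∘ g) ↔ IsMajority p)} : ℝ) ≤
      (Fintype.card κ).choose ((Fintype.card κ + 1) / 2) *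
        ((#(minority p) : ℝ) / Fintype.card ι) ^ ((Fintype.card κ : ℝ) / 2) *
        Fintype.card ι ^ Fintype.card κ := by
  set t := Fintype.card κ
  set N := Fintype.card ι
  set c := (t + 1) / 2
  set x : ℝ := #(minority p) / N
  have hN : (0 : ℝ) < N := by exact_mod_cast Fintype.card_pos
  have hx0 : 0 ≤ x := by positivity
  have hx1 : x ≤ 1 := div_le_one_of_le₀ (by exact_mod_cast card_le_univ _) hN.le
  have hNt : (N : ℝ) ^ t = N ^ c * N ^ (t - c) := by rw [← pow_add, Nat.add_sub_cancel' (by omega)]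
  calc (#{g : κ → ι | ¬(IsMajority (p ∘ g) ↔ IsMajority p)} : ℝ)
      ≤ #{g : κ → ι | c ≤ #{j | g j ∈ minority p}} := by
        exact_mod_cast card_le_card <|
          monotone_filter_right _ fun g _ h => le_card_filter_mem_minority (p := p) (g := g) h
    _ ≤ t.choose c * (#(minority p) ^ c * N ^ (t - c)) := by
        exact_mod_cast card_funs_hitting_le (minority p) c
    _ = t.choose c * x ^ c * N ^ t := by
        rw [hNt, div_pow]
        field_simp
    _ ≤ t.choose c * x ^ ((t : ℝ) / 2) * N ^ t := by
        gcongr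
        exact pow_le_rpow_half hx0 hx1 t

end Majority

lemma exists_forall_notMem_of_sum_card_lt {α β : Type*} [Fintype β] (s : Finset α)
    (B : α → Finset β) (h : ∑ a ∈ s, #(B a) < Fintype.card β) :
    ∃ b, ∀ a ∈ s, b ∉ B a := by
  classical
  by_contra! hcover
  have hsub : (univ : Finset β) ⊆ s.biUnion B := fun b _ => mem_biUnion.mpr (hcover b)
  exact ((card_le_card hsub).trans card_biUnion_le).not_gt (by rwa [card_univ])

theorem stmt17_general {n N k t : ℕ} (hN : 1 ≤ N)
    (f : Fin N → (Fin n → Bool) → Bool)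
    (hprob : (Nat.choose t ((t + 1) / 2) : ℝ) *
        ((1 / (n : ℝ) ^ k) ^ ((t : ℝ) / 2)) < 1 / 2 ^ n) :
    ∃ g : Fin t → Fin N,
      ∀ a : Fin n → Bool,
        (min ((Finset.univ.filter (fun i => f i a = false)).card : ℝ)
             ((Finset.univ.filter (fun i => f i a = true)).card : ℝ)
          < (N : ℝ) / (n : ℝ) ^ k) →
        ((t ≤ 2 * (Finset.univ.filter (fun j : Fin t => f (g j) a = true)).card) ↔
         (N ≤ 2 * (Finset.univ.filter (fun i : Fin N => f i a = true)).card)) := by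
  have : Nonempty (Fin N) := ⟨⟨0, hN⟩⟩
  have hNpos : (0 : ℝ) < N := by exact_mod_cast hN
  set ε : ℝ := 1 / (n : ℝ) ^ k
  set bound : ℝ := t.choose ((t + 1) / 2) * ε ^ ((t : ℝ) / 2) * N ^ t
  set Z := univ.filter fun a : Fin n → Bool =>
    min (#{i | f i a = false} : ℝ) #{i | f i a = true} < (N : ℝ) / (n : ℝ) ^ k
  set bad := fun a => univ.filter fun g : Fin t → Fin N =>
    ¬(IsMajority ((f · a) ∘ g) ↔ IsMajority (f · a))
  have hbad : ∀ a ∈ Z, (#(bad a) : ℝ) ≤ bound := by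
    intro a ha
    have hx : (#(minority (f · a)) : ℝ) / N ≤ ε := by
      rw [div_le_iff₀ hNpos, card_minority, Nat.cast_min]
      calc _ ≤ (N : ℝ) / (n : ℝ) ^ k := (mem_filter.mp ha).2.le
        _ = ε * N := by ring
    calc (#(bad a) : ℝ)
        ≤ t.choose ((t + 1) / 2) * ((#(minority (f · a)) : ℝ) / N) ^ ((t : ℝ) / 2) * N ^ t := by
          simpa using card_majority_disagreeing_samples_le (κ := Fin t) (f · a)
      _ ≤ bound := by
          simp only [bound]
          gcongr
  have hsum : ∑ a ∈ Z, #(bad a) < Fintype.card (Fin t → Fin N) := by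
    suffices (∑ a ∈ Z, #(bad a) : ℝ) < N ^ t by simpa using (by exact_mod_cast this)
    calc (∑ a ∈ Z, #(bad a) : ℝ) ≤ #Z * bound := by simpa using sum_le_card_nsmul _ _ _ hbad
      _ ≤ 2 ^ n * bound := by
          gcongr
          exact_mod_cast (card_le_univ Z).trans (by simp)
      _ < 2 ^ n * (1 / 2 ^ n * N ^ t) := by
          gcongr
          exact mul_lt_mul_of_pos_right hprob (by positivity)
      _ = N ^ t := by field_simp
  obtain ⟨g, hg⟩ := exists_forall_notMem_of_sum_card_lt Z bad hsum
  refine ⟨g, fun a ha => ?_⟩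
  simpa [bad, IsMajority] using hg a (by simpa [Z] using ha)

/-- Let `f_1, ..., f_N` be Boolean functions on `{0,1}^n` (`N ≥ 1`), and let `Z` be
the set of assignments `a` such that `min(#{i : f_i a = 0}, #{i : f_i a = 1}) < N/n^k`.
Fix `t ≥ 1` with `C(t, ⌈t/2⌉) · (1/n^k)^(t/2) < 1/2^n`.  Then there exist indices
`i_1, ..., i_t` (a function `g : Fin t → Fin N`, repetitions allowed) such that
`Maj(f_{i_1}, ..., f_{i_t})` agrees with `Maj(f_1, ..., f_N)` on every `a ∈ Z`
(majority of a list of Booleans is 1 iff at least half are 1). -/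
theorem stmt17 {n N k t : ℕ} (hN : 1 ≤ N) (ht : 1 ≤ t) (hn : 1 ≤ n)
    (f : Fin N → (Fin n → Bool) → Bool)
    (hprob : (Nat.choose t ((t + 1) / 2) : ℝ) *
        ((1 / (n : ℝ) ^ k) ^ ((t : ℝ) / 2)) < 1 / 2 ^ n) :
    ∃ g : Fin t → Fin N,
      ∀ a : Fin n → Bool,
        (min ((Finset.univ.filter (fun i => f i a = false)).card : ℝ)
             ((Finset.univ.filter (fun i => f i a = true)).card : ℝ)
          < (N : ℝ) / (n : ℝ) ^ k) →
        ((t ≤ 2 * (Finset.univ.filter (fun j : Fin t => f (g j) a = true)).card) ↔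
         (N ≤ 2 * (Finset.univ.filter (fun i : Fin N => f i a = true)).card)) :=
  stmt17_general hN f hprob
end
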